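/- Let $\mathcal{F}_m$ be the dyadic $\sigma$-algebras on $(0,1)$, $\mathbb{E}_m$ the associated conditional expectations ($\mathbb{E}_{-1}=0$), and $T f = \sum_{m\text{ even}}(\mathbb{E}_m f - \mathbb{E}_{m-1}f)$. For every dyadic interval $\Delta_m^l = [(l-1)2^{-m}, l\,2^{-m})$ there exists a function $x$ with $x^2 = \chi_{\Delta_m^l}$ (i.e., $x$ is a $\pm 1$-valued sign supported on $\Delta_m^l$) such that $Tx = 0$. -/

import Mathlib

open MeasureTheory Set

noncomputable section

def m01 : Measure ℝ := volume.restrict (Ioo (0:ℝ) 1)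

def rearr (x : ℝ → ℝ) (t : ℝ) : ℝ :=
  sInf {s : ℝ | 0 ≤ s ∧ m01 {u | s < |x u|} ≤ ENNReal.ofReal t}

def dil (s : ℝ) (y : ℝ → ℝ) (t : ℝ) : ℝ :=
  if t / s ∈ Icc (0:ℝ) 1 then y (t / s) else 0

def In (n : ℕ) : Set ℝ := Ioo (((2:ℝ)^(n+1))⁻¹) (((2:ℝ)^n)⁻¹)

def Jn (n : ℕ) : Set ℝ := Ioo 0 (((2:ℝ)^n)⁻¹)

def haarH (n : ℕ) : ℝ → ℝ := fun t => indicator (Jn (n+1)) 1 t - indicator (In n) 1 t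

def Eset : Set ℝ := ⋃ j : ℕ, In (2*j)

def hardyC (y : ℝ → ℝ) (t : ℝ) : ℝ := (1/t) * ∫ s in Ioo (0:ℝ) t, y s

def hardyCstar (y : ℝ → ℝ) (t : ℝ) : ℝ := ∫ s in Ioo t 1, y s / s

def calderon (y : ℝ → ℝ) (t : ℝ) : ℝ := hardyC y t + hardyCstar y t

def dyadicSA (m : ℕ) : MeasurableSpace ℝ :=
  MeasurableSpace.generateFrom
    {A | ∃ j : ℕ, 1 ≤ j ∧ j ≤ 2^m ∧ A = Ioo ((j-1 : ℝ)/2^m) ((j:ℝ)/2^m)}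

def condE (m : ℕ) (f : ℝ → ℝ) : ℝ → ℝ := m01[f | dyadicSA m]

def condEprev (m : ℕ) (f : ℝ → ℝ) : ℝ → ℝ := if m = 0 then 0 else condE (m-1) f

def Tmart (f : ℝ → ℝ) : ℝ → ℝ :=
  fun t => ∑' m : ℕ, if Even m then condE m f t - condEprev m f t else 0

def Teps (f : ℝ → ℝ) : ℝ → ℝ :=
  fun t => ∑' m : ℕ, (-1:ℝ)^m * (condE m f t - condEprev m f t)

/-!
The sign is `x = r_{q+1} · χ_Δ` with `q = 2m` and `r_p t = (-1) ^ ⌊2 ^ p t⌋` the Rademacher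
function. For `k > q`, `x` is constant on the dyadic cells of level `k`, so `𝔼_k x = x`. For
`k ≤ q`, every cell of level `k` meets `Δ` in an interval with endpoints in `2 ^ (-q) ℤ`, over
which `r_{q+1}` integrates to zero since it is antiperiodic with period `2 ^ (-q-1)`; hence
`𝔼_k x = 0`. So the only nonzero martingale difference of `x` sits at the odd level `q + 1`,
which `T` discards.

Since `dyadicSA k` is generated by open cells, the levels are nested only up to null sets, so
each `𝔼_k x` is computed directly rather than through the tower property.
-/

section GeneratedSigmaAlgebra

variable {α E : Type*} {m m0 : MeasurableSpace α} {μ : Measure α}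
  [NormedAddCommGroup E] [NormedSpace ℝ E] {S : Set (Set α)} {f : α → E}

theorem setIntegral_eq_zero_of_isPiSystem (hmS : m = MeasurableSpace.generateFrom S)
    (hS : IsPiSystem S) (hm : m ≤ m0) (hf : Integrable f μ) (hf0 : ∫ x, f x ∂μ = 0)
    (hS0 : ∀ s ∈ S, ∫ x in s, f x ∂μ = 0) {s : Set α} (hs : MeasurableSet[m] s) :
    ∫ x in s, f x ∂μ = 0 := by
  induction s, hs using MeasurableSpace.induction_on_inter hmS hS with
  | empty => simp
  | basic t ht => exact hS0 t ht
  | compl t ht iht =>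
    rwa [← integral_add_compl (hm t ht) hf, iht, zero_add] at hf0
  | iUnion g hd hg ihg =>
    simp [integral_iUnion (fun i => hm _ (hg i)) hd hf.integrableOn, ihg]

theorem condExp_eq_zero_of_isPiSystem [CompleteSpace E] (hmS : m = MeasurableSpace.generateFrom S)
    (hS : IsPiSystem S) (hm : m ≤ m0) [SigmaFinite (μ.trim hm)] (hf : Integrable f μ)
    (hf0 : ∫ x, f x ∂μ = 0) (hS0 : ∀ s ∈ S, ∫ x in s, f x ∂μ = 0) : μ[f | m] =ᵐ[μ] 0 :=
  (ae_eq_condExp_of_forall_setIntegral_eq hm hf (fun _ _ _ => integrableOn_zero)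
    (fun s hs _ => by simp [setIntegral_eq_zero_of_isPiSystem hmS hS hm hf hf0 hS0 hs])
    stronglyMeasurable_zero.aestronglyMeasurable).symm

end GeneratedSigmaAlgebra

theorem Function.Antiperiodic.intervalIntegral_add_zsmul_eq_zero {E : Type*}
    [NormedAddCommGroup E] [NormedSpace ℝ E] {f : ℝ → E} {c : ℝ} (hf : Function.Antiperiodic f c)
    (h_int : ∀ a b, IntervalIntegrable f volume a b) (n : ℤ) (t : ℝ) :
    ∫ x in t..t + n • (2 * c), f x = 0 := by
  have hperiod : ∫ x in t..t + 2 * c, f x = 0 := by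
    rw [← intervalIntegral.integral_add_adjacent_intervals (h_int t (t + c)) (h_int _ _),
      show t + 2 * c = t + c + c by ring, ← intervalIntegral.integral_comp_add_right f c]
    simp [hf _]
  rw [hf.periodic_two_mul.intervalIntegral_add_zsmul_eq n t h_int, hperiod, smul_zero]

def rademacher (p : ℕ) (t : ℝ) : ℝ := (-1) ^ ⌊t * 2 ^ p⌋

theorem rademacher_sq (p : ℕ) (t : ℝ) : rademacher p t ^ 2 = 1 := by
  rw [rademacher, ← zpow_natCast, ← zpow_mul, mul_comm, zpow_mul]; norm_num

theorem measurable_rademacher (p : ℕ) : Measurable (rademacher p) :=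
  measurable_from_top.comp (Int.measurable_floor.comp (measurable_id.mul_const _))

theorem abs_rademacher (p : ℕ) (t : ℝ) : |rademacher p t| = 1 := by
  simp [rademacher]

theorem rademacher_antiperiodic (p : ℕ) : Function.Antiperiodic (rademacher p) (2 ^ p)⁻¹ := by
  intro t
  simp [rademacher, add_mul, Int.floor_add_one, zpow_add_one₀]

theorem intervalIntegrable_rademacher (p : ℕ) (a b : ℝ) :
    IntervalIntegrable (rademacher p) volume a b :=
  (intervalIntegrable_iff.2 (Measure.integrableOn_of_bounded (M := 1) measure_Ioc_lt_top.ne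
    (measurable_rademacher p).aestronglyMeasurable (.of_forall fun t => (abs_rademacher p t).le)))

theorem integrable_rademacher {μ : Measure ℝ} [IsFiniteMeasure μ] (p : ℕ) :
    Integrable (rademacher p) μ :=
  .of_bound (measurable_rademacher p).aestronglyMeasurable 1
    (.of_forall fun t => (abs_rademacher p t).le)

def dyadicGrid (q : ℕ) : AddSubgroup ℝ := AddSubgroup.zmultiples (2 ^ q)⁻¹

theorem mem_dyadicGrid_iff {q : ℕ} {a : ℝ} : a ∈ dyadicGrid q ↔ ∃ n : ℤ, (n : ℝ) / 2 ^ q = a := by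
  simp [dyadicGrid, AddSubgroup.mem_zmultiples_iff, div_eq_mul_inv]

theorem intCast_div_two_pow_mem_dyadicGrid {k q : ℕ} (n : ℤ) (h : k ≤ q) :
    (n : ℝ) / 2 ^ k ∈ dyadicGrid q := by
  refine mem_dyadicGrid_iff.2 ⟨n * 2 ^ (q - k), ?_⟩
  rw [div_eq_div_iff (by positivity) (by positivity)]
  push_cast
  rw [mul_assoc, ← pow_add, Nat.sub_add_cancel h]

theorem intervalIntegral_rademacher_eq_zero {q : ℕ} {a b : ℝ} (ha : a ∈ dyadicGrid q)
    (hb : b ∈ dyadicGrid q) : ∫ t in a..b, rademacher (q + 1) t = 0 := by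
  obtain ⟨n, hn⟩ := AddSubgroup.mem_zmultiples_iff.1 (sub_mem hb ha)
  have hperiod : (2 : ℝ) * (2 ^ (q + 1))⁻¹ = (2 ^ q)⁻¹ := by
    rw [pow_succ]; field_simp
  rw [← add_sub_cancel a b, ← hn, ← hperiod]
  exact (rademacher_antiperiodic (q + 1)).intervalIntegral_add_zsmul_eq_zero
    (intervalIntegrable_rademacher _) n a

theorem setIntegral_Ico_rademacher_eq_zero {q : ℕ} {a b : ℝ} (ha : a ∈ dyadicGrid q)
    (hb : b ∈ dyadicGrid q) : ∫ t in Ico a b, rademacher (q + 1) t = 0 := by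
  rcases le_or_gt a b with hab | hab
  · rw [integral_Ico_eq_integral_Ioc, ← intervalIntegral.integral_of_le hab,
      intervalIntegral_rademacher_eq_zero ha hb]
  · simp [Ico_eq_empty_of_le hab.le]

theorem setIntegral_Ioo_indicator_rademacher_eq_zero {q : ℕ} {a b α β : ℝ}
    (ha : a ∈ dyadicGrid q) (hb : b ∈ dyadicGrid q) (hα : α ∈ dyadicGrid q)
    (hβ : β ∈ dyadicGrid q) :
    ∫ t in Ioo a b, (Ico α β).indicator (rademacher (q + 1)) t = 0 := by
  rw [setIntegral_congr_set Ioo_ae_eq_Ico, setIntegral_indicator measurableSet_Ico, Ico_inter_Ico]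
  exact setIntegral_Ico_rademacher_eq_zero (max_rec' _ ha hα) (min_rec' _ hb hβ)

def dyadicCell (k j : ℕ) : Set ℝ := Ioo ((j - 1 : ℝ) / 2 ^ k) ((j : ℝ) / 2 ^ k)

def dyadicCells (k : ℕ) : Set (Set ℝ) := {A | ∃ j : ℕ, 1 ≤ j ∧ j ≤ 2 ^ k ∧ A = dyadicCell k j}

theorem dyadicSA_eq_generateFrom (k : ℕ) :
    dyadicSA k = MeasurableSpace.generateFrom (dyadicCells k) := rfl

theorem dyadicSA_le (k : ℕ) : dyadicSA k ≤ Real.measurableSpace :=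
  MeasurableSpace.generateFrom_le <| by
    rintro _ ⟨j, -, -, rfl⟩
    exact measurableSet_Ioo

theorem floor_mul_two_pow_of_mem_dyadicCell {k j : ℕ} {t : ℝ} (ht : t ∈ dyadicCell k j) :
    ⌊t * 2 ^ k⌋ = j - 1 := by
  obtain ⟨h1, h2⟩ := ht
  rw [div_lt_iff₀ (by positivity)] at h1
  rw [lt_div_iff₀ (by positivity)] at h2
  rw [Int.floor_eq_iff]
  push_cast
  constructor <;> linarith

theorem eq_of_mem_dyadicCell {k i j : ℕ} {t : ℝ} (hi : t ∈ dyadicCell k i)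
    (hj : t ∈ dyadicCell k j) : i = j := by
  have := (floor_mul_two_pow_of_mem_dyadicCell hi).symm.trans
    (floor_mul_two_pow_of_mem_dyadicCell hj)
  omega

theorem isPiSystem_dyadicCells (k : ℕ) : IsPiSystem (dyadicCells k) := by
  rintro _ ⟨i, hi1, hi2, rfl⟩ _ ⟨j, -, -, rfl⟩ ⟨t, hti, htj⟩
  obtain rfl := eq_of_mem_dyadicCell hti htj
  exact ⟨i, hi1, hi2, inter_self _⟩

instance : IsFiniteMeasure m01 :=
  inferInstanceAs (IsFiniteMeasure (volume.restrict (Ioo (0 : ℝ) 1)))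

instance : NullSingletonClass m01 :=
  inferInstanceAs (NullSingletonClass (volume.restrict (Ioo (0 : ℝ) 1)))

theorem ae_exists_mem_dyadicCell (k : ℕ) :
    ∀ᵐ t ∂m01, ∃ j : ℕ, 1 ≤ j ∧ j ≤ 2 ^ k ∧ t ∈ dyadicCell k j := by
  have hgrid : ∀ᵐ t ∂m01, ∀ n : ℤ, t ≠ (n : ℝ) / 2 ^ k := ae_all_iff.2 fun n => m01.ae_ne _
  filter_upwards [ae_restrict_mem measurableSet_Ioo, hgrid] with t ⟨ht0, ht1⟩ htn
  have hpos : (0 : ℝ) < 2 ^ k := by positivity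
  have hfloor : (⌊t * 2 ^ k⌋₊ : ℝ) < t * 2 ^ k := by
    refine (Nat.floor_le (by positivity)).lt_of_ne fun h => htn ⌊t * 2 ^ k⌋₊ ?_
    rw [eq_div_iff hpos.ne', Int.cast_natCast, h]
  refine ⟨⌊t * 2 ^ k⌋₊ + 1, by omega, ?_, ?_, ?_⟩
  · have : ⌊t * 2 ^ k⌋₊ < 2 ^ k := by
      rw [Nat.floor_lt (by positivity)]; push_cast; nlinarith
    omega
  · rw [div_lt_iff₀ hpos]
    push_cast
    linarith
  · rw [lt_div_iff₀ hpos]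
    push_cast
    exact Nat.lt_floor_add_one _

def DyadicStep (k : ℕ) (f : ℝ → ℝ) : Prop := ∃ F : ℤ → ℝ, ∀ t, f t = F ⌊t * 2 ^ k⌋

theorem DyadicStep.mono {p k : ℕ} {f : ℝ → ℝ} (hf : DyadicStep p f) (h : p ≤ k) :
    DyadicStep k f := by
  obtain ⟨F, hF⟩ := hf
  refine ⟨fun n => F (n / (2 ^ (k - p) : ℕ)), fun t => ?_⟩
  rw [hF]
  show F _ = F (⌊t * 2 ^ k⌋ / _)
  rw [← Int.floor_div_natCast]
  congr 2
  rw [eq_div_iff (by positivity)]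
  push_cast
  rw [mul_assoc, ← pow_add, Nat.add_sub_cancel' h]

theorem condE_eq_self_of_dyadicStep {k : ℕ} {f : ℝ → ℝ} (hf : DyadicStep k f)
    (hfi : Integrable f m01) : condE k f =ᵐ[m01] f := by
  obtain ⟨F, hF⟩ := hf
  let g : ℝ → ℝ := fun t =>
    ∑ j ∈ Finset.Icc 1 (2 ^ k), (dyadicCell k j).indicator (fun _ => F (j - 1)) t
  have hfg : f =ᵐ[m01] g := by
    filter_upwards [ae_exists_mem_dyadicCell k] with t ⟨j, hj1, hj2, ht⟩
    show f t = ∑ j ∈ Finset.Icc 1 (2 ^ k), _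
    rw [Finset.sum_eq_single_of_mem j (Finset.mem_Icc.2 ⟨hj1, hj2⟩), indicator_of_mem ht, hF,
      floor_mul_two_pow_of_mem_dyadicCell ht]
    exact fun i _ hij => indicator_of_notMem (fun hti => hij (eq_of_mem_dyadicCell hti ht)) _
  have hg : StronglyMeasurable[dyadicSA k] g :=
    Finset.stronglyMeasurable_fun_sum _ fun j hj => stronglyMeasurable_const.indicator
      (MeasurableSpace.measurableSet_generateFrom
        ⟨j, (Finset.mem_Icc.1 hj).1, (Finset.mem_Icc.1 hj).2, rfl⟩)
  exact condExp_of_aestronglyMeasurable' (dyadicSA_le k) ⟨g, hg, hfg⟩ hfi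

theorem dyadicStep_indicator_rademacher {p : ℕ} {α β : ℝ} (hα : α ∈ dyadicGrid p)
    (hβ : β ∈ dyadicGrid p) : DyadicStep p ((Ico α β).indicator (rademacher p)) := by
  obtain ⟨A, rfl⟩ := mem_dyadicGrid_iff.1 hα
  obtain ⟨B, rfl⟩ := mem_dyadicGrid_iff.1 hβ
  refine ⟨fun n => if A ≤ n ∧ n < B then (-1) ^ n else 0, fun t => ?_⟩
  have hmem : t ∈ Ico (A / 2 ^ p : ℝ) (B / 2 ^ p) ↔ A ≤ ⌊t * 2 ^ p⌋ ∧ ⌊t * 2 ^ p⌋ < B := by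
    rw [mem_Ico, div_le_iff₀ (by positivity), lt_div_iff₀ (by positivity), Int.le_floor,
      Int.floor_lt]
  simp only [indicator_apply, hmem, rademacher]

theorem condE_indicator_rademacher_eq_zero {k q : ℕ} (hk : k ≤ q) {α β : ℝ}
    (hα : α ∈ dyadicGrid q) (hβ : β ∈ dyadicGrid q) :
    condE k ((Ico α β).indicator (rademacher (q + 1))) =ᵐ[m01] 0 := by
  have h0 : (0 : ℝ) ∈ dyadicGrid q := zero_mem _
  have h1 : (1 : ℝ) ∈ dyadicGrid q := by
    simpa using intCast_div_two_pow_mem_dyadicGrid 1 (Nat.zero_le q)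
  refine condExp_eq_zero_of_isPiSystem (dyadicSA_eq_generateFrom k) (isPiSystem_dyadicCells k)
    (dyadicSA_le k) ((integrable_rademacher _).indicator measurableSet_Ico)
    (setIntegral_Ioo_indicator_rademacher_eq_zero h0 h1 hα hβ) ?_
  rintro _ ⟨j, -, -, rfl⟩
  rw [dyadicCell, m01, Measure.restrict_restrict measurableSet_Ioo, Ioo_inter_Ioo]
  refine setIntegral_Ioo_indicator_rademacher_eq_zero (max_rec' _ ?_ h0) (min_rec' _ ?_ h1) hα hβ
  · simpa using intCast_div_two_pow_mem_dyadicGrid ((j : ℤ) - 1) hk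
  · simpa using intCast_div_two_pow_mem_dyadicGrid j hk

theorem Tmart_ae_eq_zero_of_even {f : ℝ → ℝ}
    (h : ∀ k, Even k → condE k f - condEprev k f =ᵐ[m01] 0) : Tmart f =ᵐ[m01] 0 := by
  have hall : ∀ᵐ t ∂m01, ∀ k, Even k → condE k f t - condEprev k f t = 0 := by
    refine ae_all_iff.2 fun k => ?_
    by_cases hk : Even k
    · filter_upwards [h k hk] with t ht _ using ht
    · exact .of_forall fun _ hk' => absurd hk' hk
  filter_upwards [hall] with t ht
  simp only [Tmart, Pi.zero_apply]
  exact (tsum_congr fun k => by split_ifs with hk; exacts [ht k hk, rfl]).trans tsum_zero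

theorem Tmart_ae_eq_zero_of_condE {q : ℕ} (hq : Even q) {f : ℝ → ℝ}
    (hcoarse : ∀ k ≤ q, condE k f =ᵐ[m01] 0) (hfine : ∀ k, q < k → condE k f =ᵐ[m01] f) :
    Tmart f =ᵐ[m01] 0 := by
  refine Tmart_ae_eq_zero_of_even fun k hk => ?_
  rcases le_or_gt k q with hkq | hqk
  · have hprev : condEprev k f =ᵐ[m01] 0 := by
      unfold condEprev
      split_ifs
      · rfl
      · exact hcoarse _ (by omega)
    filter_upwards [hcoarse k hkq, hprev] with t h1 h2
    simp [h1, h2]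
  · have hqk2 : q + 2 ≤ k := by
      obtain ⟨a, rfl⟩ := hk
      obtain ⟨b, rfl⟩ := hq
      omega
    rw [condEprev, if_neg (by omega)]
    filter_upwards [hfine k hqk, hfine (k - 1) (by omega)] with t h1 h2
    simp [h1, h2]

theorem sign_in_kernel_of_Tmart :
    ∀ m l : ℕ, 1 ≤ l → l ≤ 2^m →
      ∃ x : ℝ → ℝ,
        (∀ t, (x t)^2 = indicator (Ico (((l:ℝ) - 1)/2^m) ((l:ℝ)/2^m)) 1 t) ∧
        Tmart x =ᵐ[m01] 0 := by
  intro m l _ _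
  have hgrid : ∀ p, m ≤ p →
      ((l : ℝ) - 1) / 2 ^ m ∈ dyadicGrid p ∧ (l : ℝ) / 2 ^ m ∈ dyadicGrid p :=
    fun p hp => ⟨by simpa using intCast_div_two_pow_mem_dyadicGrid ((l : ℤ) - 1) hp,
      by simpa using intCast_div_two_pow_mem_dyadicGrid l hp⟩
  obtain ⟨hα, hβ⟩ := hgrid (2 * m) (by omega)
  obtain ⟨hα', hβ'⟩ := hgrid (2 * m + 1) (by omega)
  refine ⟨(Ico (((l : ℝ) - 1) / 2 ^ m) ((l : ℝ) / 2 ^ m)).indicator (rademacher (2 * m + 1)),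
    fun t => ?_, Tmart_ae_eq_zero_of_condE (even_two_mul m)
      (fun k hk => condE_indicator_rademacher_eq_zero hk hα hβ)
      (fun k hk => condE_eq_self_of_dyadicStep
        ((dyadicStep_indicator_rademacher hα' hβ').mono hk)
        ((integrable_rademacher _).indicator measurableSet_Ico))⟩
  by_cases ht : t ∈ Ico (((l : ℝ) - 1) / 2 ^ m) ((l : ℝ) / 2 ^ m) <;> simp [ht, rademacher_sq]
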